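/- arXiv:2311.18538 — 3 statements merged into one kernel-verified Lean document; each statement's English description precedes it below -/
import Mathlib

section
/- In the 4-dimensional algebra Q₂(1/4) with basis s₁, s₂, d₁, d₂ and multiplication s₁s₂ = 0, sᵢ² = sᵢ, dⱼ² = dⱼ, sᵢd₁ = (1/8)(2sᵢ + d₁ - d₂), sᵢd₂ = (1/8)(2sᵢ + d₂ - d₁), d₁d₂ = (1/4)(-s₁ - s₂ + d₁ + d₂), the element 1 = (2/3)(s₁ + s₂ + d₁ + d₂) is a multiplicative identity. -/
/-- In the 4-dimensional algebra `Q₂(1/4)` with basis `s₁, s₂, d₁, d₂` and the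
stated multiplication table, the element `(2/3)(s₁+s₂+d₁+d₂)` is a
multiplicative identity. -/
theorem Q2_identity
    {A : Type*} [NonUnitalNonAssocCommRing A] [Module ℚ A]
    [SMulCommClass ℚ A A] [IsScalarTower ℚ A A]
    (s₁ s₂ d₁ d₂ : A)
    (hspan : Submodule.span ℚ {s₁, s₂, d₁, d₂} = ⊤)
    (hs₁ : s₁ * s₁ = s₁) (hs₂ : s₂ * s₂ = s₂)
    (hd₁ : d₁ * d₁ = d₁) (hd₂ : d₂ * d₂ = d₂)
    (hss : s₁ * s₂ = 0)
    (hs₁d₁ : s₁ * d₁ = (8 : ℚ)⁻¹ • ((2 : ℚ) • s₁ + d₁ - d₂))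
    (hs₁d₂ : s₁ * d₂ = (8 : ℚ)⁻¹ • ((2 : ℚ) • s₁ + d₂ - d₁))
    (hs₂d₁ : s₂ * d₁ = (8 : ℚ)⁻¹ • ((2 : ℚ) • s₂ + d₁ - d₂))
    (hs₂d₂ : s₂ * d₂ = (8 : ℚ)⁻¹ • ((2 : ℚ) • s₂ + d₂ - d₁))
    (hdd : d₁ * d₂ = (4 : ℚ)⁻¹ • (-s₁ - s₂ + d₁ + d₂)) :
    ∀ x : A, ((2 / 3 : ℚ) • (s₁ + s₂ + d₁ + d₂)) * x = x := by
  intro x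
  have hx : x ∈ Submodule.span ℚ ({s₁, s₂, d₁, d₂} : Set A) := hspan ▸ Submodule.mem_top
  induction hx using Submodule.span_induction with
  | mem y hy =>
    rcases hy with h | h | h | h <;> rw [h]
    · rw [smul_mul_assoc, add_mul, add_mul, add_mul, hs₁, mul_comm s₂ s₁, hss,
        mul_comm d₁ s₁, mul_comm d₂ s₁, hs₁d₁, hs₁d₂]
      module
    · rw [smul_mul_assoc, add_mul, add_mul, add_mul, hss, hs₂,
        mul_comm d₁ s₂, mul_comm d₂ s₂, hs₂d₁, hs₂d₂]
      module
    · rw [smul_mul_assoc, add_mul, add_mul, add_mul, hs₁d₁, hs₂d₁, hd₁,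
        mul_comm d₂ d₁, hdd]
      module
    · rw [smul_mul_assoc, add_mul, add_mul, add_mul, hs₁d₂, hs₂d₂,
        hdd, hd₂]
      module
  | zero => simp
  | add y z _ _ hy hz => rw [mul_add, hy, hz]
  | smul c y _ hy => rw [mul_smul_comm, hy]
end

section
/- In the algebra Q₂(1/4) over a field of characteristic 0, there is no idempotent of the form s = -(1/6)s₁ - (1/6)s₂ + (2/3 - δ)d₁ + δd₂ for any scalar δ. -/
set_option maxHeartbeats 1600000


/-- In the algebra `Q₂(1/4)` over a field of characteristic zero, there is no
idempotent of the form `s = -(1/6)s₁ - (1/6)s₂ + (2/3 - δ)d₁ + δd₂`. -/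
theorem Q2_no_idempotent_family_a
    {F : Type*} [Field F] [CharZero F]
    {A : Type*} [NonUnitalNonAssocCommRing A] [Module F A]
    [SMulCommClass F A A] [IsScalarTower F A A]
    (s₁ s₂ d₁ d₂ : A)
    (hindep : LinearIndependent F ![s₁, s₂, d₁, d₂])
    (hs₁ : s₁ * s₁ = s₁) (hs₂ : s₂ * s₂ = s₂)
    (hd₁ : d₁ * d₁ = d₁) (hd₂ : d₂ * d₂ = d₂)
    (hss : s₁ * s₂ = 0)
    (hs₁d₁ : s₁ * d₁ = (8 : F)⁻¹ • ((2 : F) • s₁ + d₁ - d₂))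
    (hs₁d₂ : s₁ * d₂ = (8 : F)⁻¹ • ((2 : F) • s₁ + d₂ - d₁))
    (hs₂d₁ : s₂ * d₁ = (8 : F)⁻¹ • ((2 : F) • s₂ + d₁ - d₂))
    (hs₂d₂ : s₂ * d₂ = (8 : F)⁻¹ • ((2 : F) • s₂ + d₂ - d₁))
    (hdd : d₁ * d₂ = (4 : F)⁻¹ • (-s₁ - s₂ + d₁ + d₂)) :
    ∀ δ : F,
      ¬ ((-(6 : F)⁻¹ • s₁ + -(6 : F)⁻¹ • s₂ + (2 / 3 - δ) • d₁ + δ • d₂) *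
          (-(6 : F)⁻¹ • s₁ + -(6 : F)⁻¹ • s₂ + (2 / 3 - δ) • d₁ + δ • d₂) =
        -(6 : F)⁻¹ • s₁ + -(6 : F)⁻¹ • s₂ + (2 / 3 - δ) • d₁ + δ • d₂) := by
  intro δ h
  have hss' : s₂ * s₁ = 0 := by rw [mul_comm]; exact hss
  have hd₁s₁ : d₁ * s₁ = (8 : F)⁻¹ • ((2 : F) • s₁ + d₁ - d₂) := by rw [mul_comm]; exact hs₁d₁
  have hd₂s₁ : d₂ * s₁ = (8 : F)⁻¹ • ((2 : F) • s₁ + d₂ - d₁) := by rw [mul_comm]; exact hs₁d₂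
  have hd₁s₂ : d₁ * s₂ = (8 : F)⁻¹ • ((2 : F) • s₂ + d₁ - d₂) := by rw [mul_comm]; exact hs₂d₁
  have hd₂s₂ : d₂ * s₂ = (8 : F)⁻¹ • ((2 : F) • s₂ + d₂ - d₁) := by rw [mul_comm]; exact hs₂d₂
  have hdd' : d₂ * d₁ = (4 : F)⁻¹ • (-s₁ - s₂ + d₁ + d₂) := by rw [mul_comm]; exact hdd
  simp only [add_mul, mul_add, smul_mul_smul_comm] at h
  rw [hs₁, hs₂, hd₁, hd₂, hss, hss', hs₁d₁, hs₁d₂, hs₂d₁, hs₂d₂, hd₁s₁, hd₂s₁, hd₁s₂,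
    hd₂s₂, hdd, hdd'] at h
  have h0 : (δ^2/2 - δ/3 + 5/36 : F) • s₁ + (δ^2/2 - δ/3 + 5/36 : F) • s₂ +
      (δ^2/2 + δ/6 - 5/18 : F) • d₁ + (δ^2/2 - 5*δ/6 + 1/18 : F) • d₂ = 0 := by
    have h6 : (6 : F) ≠ 0 := by norm_num
    have h8 : (8 : F) ≠ 0 := by norm_num
    have h4 : (4 : F) ≠ 0 := by norm_num
    linear_combination (norm := (match_scalars <;> field_simp <;> ring)) h
  have key := Fintype.linearIndependent_iff.mp hindep
      ![δ^2/2 - δ/3 + 5/36, δ^2/2 - δ/3 + 5/36, δ^2/2 + δ/6 - 5/18, δ^2/2 - 5*δ/6 + 1/18]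
      (by simpa [Fin.sum_univ_four] using h0)
  have e0 := key 0
  have e2 := key 2
  have e3 := key 3
  simp only [Matrix.cons_val_zero, Matrix.cons_val_one, Matrix.cons_val_two,
    Matrix.cons_val_three, Matrix.tail_cons, Matrix.head_cons] at e0 e2 e3
  have : (1 : F)/2 = 0 := by linear_combination 2*e0 - e2 - e3
  norm_num at this
end

section
/- Let A be a commutative algebra over a field of characteristic ≠ 2 with Frobenius form, U a subalgebra, and W₁, W₂, W₃ subspaces with UWᵢ ⊆ Wᵢ. Suppose φ is an automorphism of A fixing U pointwise and acting on each Wᵢ by a scalar μᵢ. If there exist wᵢ ∈ Wᵢ and u ∈ U with (wᵢ², u) ≠ 0 for each i, and (w₁w₂, w₃) ≠ 0, then each μᵢ = ±1 and μ₁μ₂μ₃ = 1; hence (μ₁,μ₂,μ₃) ∈ {(1,1,1), (1,-1,-1), (-1,1,-1), (-1,-1,1)}. -/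
/-- Let `φ` be a form-preserving automorphism of a commutative algebra `A`
over a field of characteristic ≠ 2, fixing a subalgebra `U` pointwise and
acting by a scalar `μᵢ` on subspaces `Wᵢ` (`i = 1,2,3`).  If there are
`wᵢ ∈ Wᵢ` and `u ∈ U` with `(wᵢ², u) ≠ 0` for each `i` and `(w₁w₂, w₃) ≠ 0`,
then each `μᵢ = ±1` and `μ₁μ₂μ₃ = 1`; hence
`(μ₁,μ₂,μ₃) ∈ {(1,1,1), (1,-1,-1), (-1,1,-1), (-1,-1,1)}`. -/
theorem scalar_extension_signs
    {F : Type*} [Field F] (hchar : (2 : F) ≠ 0)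
    {A : Type*} [NonUnitalNonAssocCommRing A] [Module F A]
    [SMulCommClass F A A] [IsScalarTower F A A]
    (B : A →ₗ[F] A →ₗ[F] F)
    (φ : A →ₗ[F] A)
    (hφmul : ∀ x y : A, φ (x * y) = φ x * φ y)
    (hφform : ∀ x y : A, B (φ x) (φ y) = B x y)
    (U : Set A) (hU : ∀ u ∈ U, φ u = u)
    (W : Fin 3 → Set A) (μ : Fin 3 → F)
    (hW : ∀ i, ∀ w ∈ W i, φ w = μ i • w)
    (w : Fin 3 → A) (hwmem : ∀ i, w i ∈ W i)
    (u : A) (humem : u ∈ U)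
    (hnz : ∀ i, B (w i * w i) u ≠ 0)
    (hnz3 : B (w 0 * w 1) (w 2) ≠ 0) :
    (∀ i, μ i = 1 ∨ μ i = -1) ∧ μ 0 * μ 1 * μ 2 = 1 ∧
      (μ 0, μ 1, μ 2) ∈
        ({(1, 1, 1), (1, -1, -1), (-1, 1, -1), (-1, -1, 1)} :
          Set (F × F × F)) := by
  have hpm : ∀ i, μ i = 1 ∨ μ i = -1 := by
    intro i
    have h := hφform (w i * w i) u
    rw [hU u humem, hφmul, hW i (w i) (hwmem i), smul_mul_smul_comm] at h
    simp only [map_smul, LinearMap.smul_apply, smul_eq_mul] at h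
    have h' : (μ i * μ i - 1) * B (w i * w i) u = 0 := by linear_combination h
    rcases mul_eq_zero.mp h' with h'' | h''
    · exact mul_self_eq_one_iff.mp (by linear_combination h'')
    · exact absurd h'' (hnz i)
  have hprod : μ 0 * μ 1 * μ 2 = 1 := by
    have h := hφform (w 0 * w 1) (w 2)
    rw [hφmul, hW 0 (w 0) (hwmem 0), hW 1 (w 1) (hwmem 1), hW 2 (w 2) (hwmem 2),
      smul_mul_smul_comm] at h
    simp only [map_smul, LinearMap.smul_apply, smul_eq_mul] at h
    have h' : (μ 0 * μ 1 * μ 2 - 1) * B (w 0 * w 1) (w 2) = 0 := by linear_combination h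
    rcases mul_eq_zero.mp h' with h'' | h''
    · linear_combination h''
    · exact absurd h'' hnz3
  refine ⟨hpm, hprod, ?_⟩
  have hne : (-1 : F) ≠ 1 := fun h => hchar (by linear_combination -h)
  rcases hpm 0 with h0 | h0 <;> rcases hpm 1 with h1 | h1 <;> rcases hpm 2 with h2 | h2 <;>
    rw [h0, h1, h2] at hprod ⊢ <;>
    simp_all [Set.mem_insert_iff, Prod.ext_iff]
end
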